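/- arXiv:2109.06510 — 4 statements merged into one kernel-verified Lean document; each statement's English description precedes it below -/
import Mathlib

section
/- For every real number α with 0 < α < 1, the sequence b_k = (1/(2-α))·[(k+1)^{2-α} - k^{2-α}] - (1/2)·[(k+1)^{1-α} + k^{1-α}] (for k ≥ 0) is positive, i.e., b_k > 0 for all k ≥ 0. -/
/-! Since `t ↦ t ^ (1 - α)` has antiderivative `t ^ (2 - α) / (2 - α)`, `b k` is the integral of
`t ^ (1 - α)` over `[k, k + 1]` minus its trapezoidal approximation. The integrand is strictly
concave, so it lies above its chord and the trapezoidal rule strictly underestimates the integral. -/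

open Set

theorem StrictConcaveOn.trapezoid_lt_integral {f : ℝ → ℝ} {a b : ℝ} (hab : a < b)
    (hf : StrictConcaveOn ℝ (Icc a b) f) (hcont : ContinuousOn f (Icc a b)) :
    (b - a) * (f a + f b) / 2 < ∫ x in a..b, f x := by
  have hba : 0 < b - a := sub_pos.2 hab
  set chord : ℝ → ℝ := fun x => ((b - x) * f a + (x - a) * f b) / (b - a)
  have chord_eq : ∀ x, chord x = ((b - x) / (b - a)) • f a + ((x - a) / (b - a)) • f b := by
    intro x; simp only [chord, smul_eq_mul]; ring
  have point_eq : ∀ x, ((b - x) / (b - a)) • a + ((x - a) / (b - a)) • b = x := by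
    intro x; simp only [smul_eq_mul]; field_simp; ring
  have weights_sum : ∀ x, (b - x) / (b - a) + (x - a) / (b - a) = 1 := by
    intro x; field_simp; ring
  have integral_chord : ∫ x in a..b, chord x = (b - a) * (f a + f b) / 2 := by
    have hint : ∀ g : ℝ → ℝ, Continuous g → IntervalIntegrable g MeasureTheory.volume a b :=
      fun g hg => hg.intervalIntegrable a b
    simp only [chord, intervalIntegral.integral_div, sub_mul]
    rw [intervalIntegral.integral_add (hint _ (by fun_prop)) (hint _ (by fun_prop)),
      intervalIntegral.integral_sub (hint _ (by fun_prop)) (hint _ (by fun_prop)),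
      intervalIntegral.integral_sub (hint _ (by fun_prop)) (hint _ (by fun_prop))]
    simp only [intervalIntegral.integral_mul_const, intervalIntegral.integral_const, integral_id,
      smul_eq_mul]
    field_simp
    ring
  have chord_le : ∀ x ∈ Ioc a b, chord x ≤ f x := by
    rintro x ⟨hax, hxb⟩
    have := hf.concaveOn.2 (left_mem_Icc.2 hab.le) (right_mem_Icc.2 hab.le)
      (div_nonneg (sub_nonneg.2 hxb) hba.le) (div_nonneg (sub_nonneg.2 hax.le) hba.le)
      (weights_sum x)
    rwa [point_eq, ← chord_eq] at this
  have chord_lt : ∀ x ∈ Ioo a b, chord x < f x := by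
    rintro x ⟨hax, hxb⟩
    have := hf.2 (left_mem_Icc.2 hab.le) (right_mem_Icc.2 hab.le) hab.ne
      (div_pos (sub_pos.2 hxb) hba) (div_pos (sub_pos.2 hax) hba) (weights_sum x)
    rwa [point_eq, ← chord_eq] at this
  obtain ⟨m, hm⟩ := nonempty_Ioo.2 hab
  rw [← integral_chord]
  exact intervalIntegral.integral_lt_integral_of_continuousOn_of_le_of_exists_lt hab
    (by fun_prop) hcont chord_le ⟨m, Ioo_subset_Icc_self hm, chord_lt m hm⟩

/-- For every real α with 0 < α < 1, the L2-type coefficients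
`b_k = (1/(2-α))[(k+1)^(2-α) - k^(2-α)] - (1/2)[(k+1)^(1-α) + k^(1-α)]` are positive. -/
theorem stmt1 (α : ℝ) (hα0 : 0 < α) (hα1 : α < 1) (b : ℕ → ℝ)
    (hb : ∀ k : ℕ, b k =
      (1 / (2 - α)) * (((k : ℝ) + 1) ^ (2 - α) - (k : ℝ) ^ (2 - α)) -
      (1 / 2) * (((k : ℝ) + 1) ^ (1 - α) + (k : ℝ) ^ (1 - α))) :
    ∀ k : ℕ, 0 < b k := by
  intro k
  have hk : Icc (k : ℝ) (k + 1) ⊆ Ici 0 := fun x hx => le_trans k.cast_nonneg hx.1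
  have trapezoid := ((Real.strictConcaveOn_rpow (p := 1 - α) (by linarith) (by linarith)).subset hk
    (convex_Icc _ _)).trapezoid_lt_integral (lt_add_one (k : ℝ))
    ((Real.continuous_rpow_const (by linarith)).continuousOn)
  rw [integral_rpow (Or.inl (by linarith)), show 1 - α + 1 = 2 - α by ring, add_sub_cancel_left,
    one_mul] at trapezoid
  rw [hb k, one_div_mul_eq_div]
  linarith
end

section
/- For every real number α with 0 < α < 1, the sequence b_k = (1/(2-α))·[(k+1)^{2-α} - k^{2-α}] - (1/2)·[(k+1)^{1-α} + k^{1-α}] is strictly decreasing in k, i.e., b_{k+1} < b_k for all k ≥ 0. -/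
/-!
With `f t = t ^ (1 - α)`, `b_k` is the error `∫_k^{k+1} f - (f k + f (k+1)) / 2` of the trapezoidal
rule on `[k, k+1]`. Extending `k` to a real variable `x`, the derivative of this error is
`f (x+1) - f x - (f' x + f' (x+1)) / 2`, i.e. minus the trapezoidal error for `f'` on `[x, x+1]`.
Since `f' t = (1 - α) t ^ (-α)` is strictly convex, it lies strictly below its chord, so the
trapezoidal rule strictly overestimates its integral and the derivative is negative.
-/

open Set intervalIntegral

namespace Real

theorem strictConvexOn_const_mul_rpow_of_neg {c p : ℝ} (hc : 0 < c) (hp : p < 0) :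
    StrictConvexOn ℝ (Ioi 0) fun x : ℝ => c * x ^ p := by
  have hderiv : deriv (fun x : ℝ => c * x ^ p) = fun x => c * p * x ^ (p - 1) := by
    funext x
    simp only [deriv_const_mul_field', deriv_rpow_const, mul_assoc]
  refine StrictMonoOn.strictConvexOn_of_deriv (convex_Ioi 0)
    (fun x hx => (continuousAt_rpow_const x p (Or.inl hx.ne')).continuousWithinAt.const_mul c) ?_
  rw [interior_Ioi, hderiv]
  intro x hx y _ hxy
  exact mul_lt_mul_of_neg_left (rpow_lt_rpow_of_neg hx hxy (by linarith))
    (mul_neg_of_pos_of_neg hc hp)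

end Real

theorem StrictConvexOn.integral_lt_trapezoid {φ : ℝ → ℝ} {a b : ℝ} (hab : a < b)
    (hφ : StrictConvexOn ℝ (Icc a b) φ) (hφc : ContinuousOn φ (Icc a b)) :
    ∫ t in a..b, φ t < (b - a) / 2 * (φ a + φ b) := by
  have hba : 0 < b - a := sub_pos.mpr hab
  set chord : ℝ → ℝ := fun t => ((b - t) * φ a + (t - a) * φ b) / (b - a) with hchord
  have chord_eq : ∀ t, chord t = ((b - t) / (b - a)) • φ a + ((t - a) / (b - a)) • φ b := by
    intro t; simp only [hchord, smul_eq_mul]; field_simp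
  have point_eq : ∀ t, t = ((b - t) / (b - a)) • a + ((t - a) / (b - a)) • b := by
    intro t; simp only [smul_eq_mul]; field_simp; ring
  have weights_sum : ∀ t, (b - t) / (b - a) + (t - a) / (b - a) = 1 := by
    intro t; field_simp; ring
  have hle : ∀ t ∈ Icc a b, φ t ≤ chord t := by
    intro t ht
    rw [chord_eq]
    conv_lhs => rw [point_eq t]
    exact hφ.convexOn.2 (left_mem_Icc.mpr hab.le) (right_mem_Icc.mpr hab.le)
      (div_nonneg (by linarith [ht.2]) hba.le) (div_nonneg (by linarith [ht.1]) hba.le)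
      (weights_sum t)
  have hlt : ∀ t ∈ Ioo a b, φ t < chord t := by
    intro t ht
    rw [chord_eq]
    conv_lhs => rw [point_eq t]
    exact hφ.2 (left_mem_Icc.mpr hab.le) (right_mem_Icc.mpr hab.le) hab.ne
      (div_pos (by linarith [ht.2]) hba) (div_pos (by linarith [ht.1]) hba) (weights_sum t)
  have integral_chord : ∫ t in a..b, chord t = (b - a) / 2 * (φ a + φ b) := by
    have affine : ∀ t, (b - t) * φ a + (t - a) * φ b = t * (φ b - φ a) + (b * φ a - a * φ b) := by
      intro t; ring
    simp only [hchord, integral_div, affine]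
    rw [integral_add (intervalIntegrable_id.mul_const _) intervalIntegrable_const,
      integral_mul_const, integral_id, integral_const, smul_eq_mul]
    field_simp
    ring
  rw [← integral_chord]
  refine integral_lt_integral_of_continuousOn_of_le_of_exists_lt hab hφc (by fun_prop)
    (fun t ht => hle t (Ioc_subset_Icc_self ht)) ⟨(a + b) / 2, ?_, hlt _ ?_⟩ <;>
    constructor <;> linarith

theorem sub_lt_trapezoid_of_hasDerivAt {f f' : ℝ → ℝ} {a b : ℝ} (hab : a < b)
    (hf : ∀ t ∈ Icc a b, HasDerivAt f (f' t) t) (hf' : StrictConvexOn ℝ (Icc a b) f')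
    (hf'c : ContinuousOn f' (Icc a b)) :
    f b - f a < (b - a) / 2 * (f' a + f' b) := by
  rw [← integral_eq_sub_of_hasDerivAt (by rwa [uIcc_of_le hab.le])
    (hf'c.intervalIntegrable_of_Icc hab.le)]
  exact hf'.integral_lt_trapezoid hab hf'c

theorem strictAntiOn_trapezoid_defect_of_strictConvexOn_deriv {G f f' : ℝ → ℝ} {a h : ℝ}
    (hh : 0 < h) (hGc : ContinuousOn G (Ici a)) (hfc : ContinuousOn f (Ici a))
    (hG : ∀ x ∈ Ioi a, HasDerivAt G (f x) x) (hf : ∀ x ∈ Ioi a, HasDerivAt f (f' x) x)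
    (hf' : StrictConvexOn ℝ (Ioi a) f') :
    StrictAntiOn (fun x => G (x + h) - G x - h / 2 * (f (x + h) + f x)) (Ici a) := by
  have shift_Ici : MapsTo (· + h) (Ici a) (Ici a) := fun x hx => by
    simp only [mem_Ici] at hx ⊢; linarith
  have shift_Ioi : ∀ x ∈ Ioi a, x + h ∈ Ioi a := fun x hx => by
    simp only [mem_Ioi] at hx ⊢; linarith
  have hshift : ContinuousOn (· + h) (Ici a) := by fun_prop
  refine strictAntiOn_of_hasDerivWithinAt_neg (convex_Ici a)
    (f' := fun x => f (x + h) - f x - h / 2 * (f' (x + h) + f' x))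
    (((hGc.comp hshift shift_Ici).sub hGc).sub
      (continuousOn_const.mul ((hfc.comp hshift shift_Ici).add hfc))) ?_ ?_
  all_goals intro x hx; rw [interior_Ici] at hx
  · exact ((((hG _ (shift_Ioi x hx)).comp_add_const x h).sub (hG x hx)).sub
      ((((hf _ (shift_Ioi x hx)).comp_add_const x h).add (hf x hx)).const_mul _)).hasDerivWithinAt
  · have hsub : Icc x (x + h) ⊆ Ioi a := fun t ht => lt_of_lt_of_le hx ht.1
    have key := sub_lt_trapezoid_of_hasDerivAt (lt_add_of_pos_right x hh)
      (fun t ht => hf t (hsub ht)) (hf'.subset hsub (convex_Icc _ _))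
      ((hf'.convexOn.continuousOn isOpen_Ioi).mono hsub)
    rw [add_sub_cancel_left] at key
    linarith

/-- For every real α with 0 < α < 1, the L2-type coefficients `b_k` are strictly decreasing. -/
theorem stmt2 (α : ℝ) (hα0 : 0 < α) (hα1 : α < 1) (b : ℕ → ℝ)
    (hb : ∀ k : ℕ, b k =
      (1 / (2 - α)) * (((k : ℝ) + 1) ^ (2 - α) - (k : ℝ) ^ (2 - α)) -
      (1 / 2) * (((k : ℝ) + 1) ^ (1 - α) + (k : ℝ) ^ (1 - α))) :
    ∀ k : ℕ, b (k + 1) < b k := by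
  have h2α : 0 < 2 - α := by linarith
  have h1α : 0 < 1 - α := by linarith
  have hG : ∀ x ∈ Ioi (0 : ℝ), HasDerivAt (fun x => x ^ (2 - α) / (2 - α)) (x ^ (1 - α)) x := by
    intro x hx
    have h := (Real.hasDerivAt_rpow_const (p := 2 - α) (Or.inl (ne_of_gt hx))).div_const (2 - α)
    rwa [show 2 - α - 1 = 1 - α by ring, mul_div_cancel_left₀ _ h2α.ne'] at h
  have hf : ∀ x ∈ Ioi (0 : ℝ), HasDerivAt (fun x => x ^ (1 - α)) ((1 - α) * x ^ (-α)) x := by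
    intro x hx
    have h := Real.hasDerivAt_rpow_const (p := 1 - α) (Or.inl (ne_of_gt hx))
    rwa [show 1 - α - 1 = -α by ring] at h
  have hanti := strictAntiOn_trapezoid_defect_of_strictConvexOn_deriv one_pos
    ((Real.continuous_rpow_const h2α.le).div_const _).continuousOn
    (Real.continuous_rpow_const h1α.le).continuousOn hG hf
    (Real.strictConvexOn_const_mul_rpow_of_neg h1α (neg_neg_of_pos hα0))
  intro k
  rw [hb, hb]
  push_cast
  refine ((Eq.trans_lt ?_ (hanti (mem_Ici.mpr k.cast_nonneg) (mem_Ici.mpr (by positivity))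
    (lt_add_one (k : ℝ)))).trans_eq ?_) <;> ring
end

section
/- For α ∈ (0, 0.3624), one has c̃_1 - c_0 < 0, where c̃_1 = a_1 + b_1 + b_2 - b_0 and c_0 = a_0 + b_0, with a_k, b_k the L2-type coefficients. In particular this follows from a_1 < a_0, b_1 < b_0, and b_2 < b_0. -/
/-!
Writing `t = 1 - α`, the terms in `2 ^ t` cancel and
`c̃₁ - c₀ = (3 ^ t (4 + α) - (12 - 3α)) / (2 (2 - α))`.
Bernoulli's inequality for the concave power `3 ^ t ≤ 1 + 2t` bounds the numerator by
`(3 - 2α)(4 + α) - (12 - 3α) = -2α(1 + α) < 0`.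
-/

open Real

noncomputable def coeffA (α : ℝ) (k : ℕ) : ℝ :=
  ((k : ℝ) + 1) ^ (1 - α) - (k : ℝ) ^ (1 - α)

noncomputable def coeffB (α : ℝ) (k : ℕ) : ℝ :=
  (1 / (2 - α)) * (((k : ℝ) + 1) ^ (2 - α) - (k : ℝ) ^ (2 - α)) -
    (1 / 2) * (((k : ℝ) + 1) ^ (1 - α) + (k : ℝ) ^ (1 - α))

noncomputable def cZero (α : ℝ) : ℝ := coeffA α 0 + coeffB α 0

noncomputable def cTildeOne (α : ℝ) : ℝ := coeffA α 1 + coeffB α 1 + coeffB α 2 - coeffB α 0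

lemma rpow_two_sub {x : ℝ} (hx : 0 < x) (α : ℝ) : x ^ (2 - α) = x * x ^ (1 - α) := by
  rw [show 2 - α = 1 + (1 - α) by ring, rpow_add hx, rpow_one]

section

variable {α : ℝ}

lemma coeffA_zero (hα : α < 1) : coeffA α 0 = 1 := by
  simp [coeffA, zero_rpow (sub_ne_zero.2 hα.ne')]

lemma coeffA_one : coeffA α 1 = 2 ^ (1 - α) - 1 := by
  norm_num [coeffA]

lemma coeffB_zero (hα : α < 1) : coeffB α 0 = 1 / (2 - α) - 1 / 2 := by
  simp [coeffB, zero_rpow (sub_ne_zero.2 hα.ne'), zero_rpow (by linarith : 2 - α ≠ 0)]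

lemma coeffB_one : coeffB α 1 = (2 * 2 ^ (1 - α) - 1) / (2 - α) - (2 ^ (1 - α) + 1) / 2 := by
  norm_num [coeffB, rpow_two_sub two_pos]
  ring

lemma coeffB_two :
    coeffB α 2 = (3 * 3 ^ (1 - α) - 2 * 2 ^ (1 - α)) / (2 - α) - (3 ^ (1 - α) + 2 ^ (1 - α)) / 2 := by
  norm_num [coeffB, rpow_two_sub two_pos, rpow_two_sub three_pos]
  ring

lemma cTildeOne_sub_cZero (hα : α < 1) :
    cTildeOne α - cZero α = (3 ^ (1 - α) * (4 + α) - (12 - 3 * α)) / (2 * (2 - α)) := by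
  have h2α : 2 - α ≠ 0 := by linarith
  rw [cTildeOne, cZero, coeffA_zero hα, coeffA_one, coeffB_zero hα, coeffB_one, coeffB_two]
  field_simp
  ring

lemma three_rpow_one_sub_mul_lt (h0 : 0 < α) (h1 : α ≤ 1) :
    (3 : ℝ) ^ (1 - α) * (4 + α) < 12 - 3 * α := by
  have bernoulli : (3 : ℝ) ^ (1 - α) ≤ 3 - 2 * α := by
    have := rpow_one_add_le_one_add_mul_self (s := 2) (by norm_num) (p := 1 - α)
      (by linarith) (by linarith)
    norm_num at this
    linarith
  nlinarith

lemma cTildeOne_sub_cZero_neg (h0 : 0 < α) (h1 : α < 1) : cTildeOne α - cZero α < 0 := by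
  rw [cTildeOne_sub_cZero h1]
  exact div_neg_of_neg_of_pos (by linarith [three_rpow_one_sub_mul_lt h0 h1.le]) (by linarith)

end

/-- For α ∈ (0, 0.3624), one has c̃₁ - c₀ < 0 where c̃₁ = a₁ + b₁ + b₂ - b₀ and
c₀ = a₀ + b₀, with a_k, b_k the L2-type coefficients. -/
theorem stmt4 (α : ℝ) (hα0 : 0 < α) (hα1 : α < 0.3624)
    (a b : ℕ → ℝ)
    (ha : ∀ k : ℕ, a k = ((k : ℝ) + 1) ^ (1 - α) - (k : ℝ) ^ (1 - α))
    (hb : ∀ k : ℕ, b k =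
      (1 / (2 - α)) * (((k : ℝ) + 1) ^ (2 - α) - (k : ℝ) ^ (2 - α)) -
      (1 / 2) * (((k : ℝ) + 1) ^ (1 - α) + (k : ℝ) ^ (1 - α)))
    (c₀ ctilde₁ : ℝ)
    (hc₀ : c₀ = a 0 + b 0)
    (hct₁ : ctilde₁ = a 1 + b 1 + b 2 - b 0) :
    ctilde₁ - c₀ < 0 := by
  obtain rfl : a = coeffA α := funext ha
  obtain rfl : b = coeffB α := funext hb
  subst hc₀ hct₁
  exact cTildeOne_sub_cZero_neg hα0 (by norm_num at hα1; linarith)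
end

section
/- Let g_k^β = (-1)^k Γ(1+β) / (Γ(β/2 - k + 1) Γ(β/2 + k + 1)) for integers k and β ∈ (1,2). Then g_0^β > 0, g_k^β = g_{-k}^β for all k, and g_k^β < 0 for all k ≠ 0. -/
/-!
Write `a = β/2 ∈ (0, 1)`. For `k = n + 1 ≥ 1` the factor `Γ(a - k + 1) = Γ(a - n)` has sign
`(-1)^n`, by descending from `Γ(a) > 0` with `Γ(x) = Γ(x + 1) / x`, each step dividing by a
negative `x`. Hence `(-1)^k / Γ(a - k + 1) < 0`, while all other factors are Gamma values at
positive arguments. The symmetry `k ↦ -k` merely swaps the two Gamma factors of the denominator.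
-/

open Real

theorem Real.neg_one_pow_mul_Gamma_sub_natCast_pos {a : ℝ} (ha₀ : 0 < a) (ha₁ : a < 1) (n : ℕ) :
    0 < (-1) ^ n * Gamma (a - n) := by
  induction n with
  | zero => simpa using Gamma_pos_of_pos ha₀
  | succ n ih =>
    have hneg : a - (n + 1 : ℕ) < 0 := by push_cast; linarith [(n.cast_nonneg : (0 : ℝ) ≤ n)]
    have hrec : Gamma (a - n) = (a - (n + 1 : ℕ)) * Gamma (a - (n + 1 : ℕ)) := by
      rw [← Gamma_add_one hneg.ne]; push_cast; ring_nf
    rw [hrec, mul_left_comm] at ih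
    rw [pow_succ]
    linarith [neg_of_mul_pos_right ih hneg.le]

noncomputable def rieszCoeff (β : ℝ) (k : ℤ) : ℝ :=
  (-1 : ℝ) ^ k * Gamma (1 + β) / (Gamma (β / 2 - (k : ℝ) + 1) * Gamma (β / 2 + (k : ℝ) + 1))

theorem rieszCoeff_neg (β : ℝ) (k : ℤ) : rieszCoeff β (-k) = rieszCoeff β k := by
  simp only [rieszCoeff, zpow_neg, ← inv_zpow, inv_neg_one, Int.cast_neg, sub_neg_eq_add,
    ← sub_eq_add_neg, mul_comm (Gamma (β / 2 + k + 1))]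

theorem rieszCoeff_zero_pos {β : ℝ} (hβ : -1 < β) : 0 < rieszCoeff β 0 := by
  have h : 0 < Gamma (β / 2 + 1) := Gamma_pos_of_pos (by linarith)
  simp only [rieszCoeff, zpow_zero, one_mul, Int.cast_zero, sub_zero, add_zero]
  exact div_pos (Gamma_pos_of_pos (by linarith)) (mul_pos h h)

theorem rieszCoeff_natCast_neg {β : ℝ} (hβ₀ : 0 < β) (hβ₂ : β < 2) {n : ℕ} (hn : n ≠ 0) :
    rieszCoeff β n < 0 := by
  obtain ⟨m, rfl⟩ := Nat.exists_eq_succ_of_ne_zero hn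
  have hsign := neg_one_pow_mul_Gamma_sub_natCast_pos (a := β / 2) (by linarith) (by linarith) m
  have hA : 0 < Gamma (1 + β) := Gamma_pos_of_pos (by linarith)
  have hC : 0 < Gamma (β / 2 + (m + 1 : ℕ) + 1) := Gamma_pos_of_pos (by positivity)
  have hshift : β / 2 - ((m + 1 : ℕ) : ℤ) + 1 = β / 2 - m := by push_cast; ring
  have hpow : (-1 : ℝ) ^ ((m + 1 : ℕ) : ℤ) = -(-1) ^ m := by rw [zpow_natCast, pow_succ]; ring
  have hinv : (-1 : ℝ) ^ m = ((-1) ^ m)⁻¹ := by rw [← inv_pow, inv_neg_one]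
  rw [rieszCoeff, hshift, hpow, Int.cast_natCast, hinv]
  calc -((-1) ^ m)⁻¹ * Gamma (1 + β) / (Gamma (β / 2 - m) * Gamma (β / 2 + (m + 1 : ℕ) + 1))
      = -(Gamma (1 + β) / ((-1) ^ m * Gamma (β / 2 - m) * Gamma (β / 2 + (m + 1 : ℕ) + 1))) := by
        ring
    _ < 0 := neg_neg_of_pos (div_pos hA (mul_pos hsign hC))

theorem rieszCoeff_neg_of_ne_zero {β : ℝ} (hβ₀ : 0 < β) (hβ₂ : β < 2) {k : ℤ} (hk : k ≠ 0) :
    rieszCoeff β k < 0 := by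
  have hneg := rieszCoeff_natCast_neg hβ₀ hβ₂ (Int.natAbs_ne_zero.mpr hk)
  rcases Int.natAbs_eq k with h | h
  · rwa [h]
  · rwa [h, rieszCoeff_neg]

/-- For β ∈ (1,2) and g_k = (-1)^k Γ(1+β)/(Γ(β/2-k+1)Γ(β/2+k+1)):
g₀ > 0, g_k = g_{-k}, and g_k < 0 for k ≠ 0. -/
theorem stmt18 (β : ℝ) (hβ1 : 1 < β) (hβ2 : β < 2) (g : ℤ → ℝ)
    (hg : ∀ k : ℤ, g k = (-1 : ℝ) ^ k * Real.Gamma (1 + β) /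
      (Real.Gamma (β / 2 - (k : ℝ) + 1) * Real.Gamma (β / 2 + (k : ℝ) + 1))) :
    0 < g 0 ∧ (∀ k : ℤ, g k = g (-k)) ∧ (∀ k : ℤ, k ≠ 0 → g k < 0) := by
  obtain rfl : g = rieszCoeff β := funext hg
  exact ⟨rieszCoeff_zero_pos (by linarith), fun k => (rieszCoeff_neg β k).symm,
    fun k hk => rieszCoeff_neg_of_ne_zero (by linarith) hβ2 hk⟩
end
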